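/- arXiv:0806.1667 — 3 statements merged into one kernel-verified Lean document; each statement's English description precedes it below -/
import Mathlib

section
/- The Hardy–Littlewood prime-pair constants have mean value one: (1/m) · ∑_{r=1}^{m} C_{2r} → 1 as m → ∞; equivalently, ∑_{1 ≤ r ≤ m} C_{2r} ∼ m. -/
open Filter Topology

/-- The twin prime constant `C₂ = ∏_{p > 2 prime} (1 - 1/(p-1)²)`. -/
noncomputable def twinPrimeConst : ℝ :=
  ∏' p : {p : ℕ // p.Prime ∧ 2 < p}, (1 - 1 / ((p : ℕ) - 1 : ℝ) ^ 2)

/-- The Hardy–Littlewood constant `C_{2r} = C₂ ∏_{p ∣ r, p > 2} (p-1)/(p-2)`. -/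
noncomputable def HLconst (r : ℕ) : ℝ :=
  twinPrimeConst *
    ∏ p ∈ r.primeFactors.filter (fun p => 2 < p), (((p : ℝ) - 1) / ((p : ℝ) - 2))

/-!
Put `w(d) = μ(d)² ∏_{p ∣ d} (p - 2)⁻¹`, which vanishes on even `d`. Expanding the product over
`p ∣ r` gives `C_{2r} = C₂ ∑_{d ∣ r} w(d)`, hence `∑_{r ≤ m} C_{2r} = C₂ ∑_{d ≤ m} w(d) ⌊m / d⌋`.
The terms of `∑_d w(d) / d` are `O(d^{-3/2})`, so dominated convergence turns the mean value into
`C₂ ∑_d w(d) / d`, and the Euler product of this series is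
`∏_{p > 2} (1 + 1 / (p (p - 2))) = ∏_{p > 2} (p - 1)² / (p (p - 2)) = C₂⁻¹`.
-/

open Finset
open scoped ArithmeticFunction.zeta

namespace ArithmeticFunction

variable {R : Type*}

noncomputable def squarefreeProd [CommMonoidWithZero R] (g : ℕ → R) : ArithmeticFunction R :=
  ⟨fun d => if Squarefree d then ∏ p ∈ d.primeFactors, g p else 0, by simp⟩

section CommMonoidWithZero

variable [CommMonoidWithZero R] (g : ℕ → R)

theorem squarefreeProd_apply (d : ℕ) :
    squarefreeProd g d = if Squarefree d then ∏ p ∈ d.primeFactors, g p else 0 :=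
  rfl

theorem isMultiplicative_squarefreeProd : (squarefreeProd g).IsMultiplicative := by
  refine IsMultiplicative.iff_ne_zero.mpr ⟨by simp [squarefreeProd_apply], fun hm hn hmn => ?_⟩
  simp only [squarefreeProd_apply, Nat.squarefree_mul hmn, Nat.primeFactors_mul hm hn,
    prod_union hmn.disjoint_primeFactors, ite_zero_mul_ite_zero]

theorem squarefreeProd_prime {p : ℕ} (hp : p.Prime) : squarefreeProd g p = g p := by
  rw [squarefreeProd_apply, if_pos hp.squarefree, hp.primeFactors, prod_singleton]

theorem squarefreeProd_prime_pow {p k : ℕ} (hp : p.Prime) (hk : 2 ≤ k) :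
    squarefreeProd g (p ^ k) = 0 := by
  rw [squarefreeProd_apply, if_neg]
  rw [Nat.squarefree_pow_iff hp.ne_one (by omega)]
  omega

end CommMonoidWithZero

theorem sum_range_squarefreeProd_prime_pow [CommSemiring R] (g : ℕ → R) {p k : ℕ}
    (hp : p.Prime) (hk : k ≠ 0) :
    ∑ i ∈ range (k + 1), squarefreeProd g (p ^ i) = 1 + g p := by
  obtain ⟨j, rfl⟩ := Nat.exists_eq_succ_of_ne_zero hk
  rw [sum_range_succ', sum_range_succ', sum_eq_zero fun i _ => squarefreeProd_prime_pow g hp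
    (by omega), zero_add, pow_one, squarefreeProd_prime g hp, pow_zero,
    (isMultiplicative_squarefreeProd g).map_one, add_comm]

theorem sum_divisors_squarefreeProd [CommSemiring R] (g : ℕ → R) {n : ℕ} (hn : n ≠ 0) :
    ∑ d ∈ n.divisors, squarefreeProd g d = ∏ p ∈ n.primeFactors, (1 + g p) := by
  rw [← coe_mul_zeta_apply, ((isMultiplicative_squarefreeProd g).mul
    isMultiplicative_zeta.natCast).multiplicative_factorization _ hn,
    Nat.prod_factorization_eq_prod_primeFactors]
  refine prod_congr rfl fun p hp => ?_
  have hp' := Nat.prime_of_mem_primeFactors hp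
  have hk : n.factorization p ≠ 0 := Finsupp.mem_support_iff.mp (by rwa [Nat.support_factorization])
  rw [coe_mul_zeta_apply, Nat.sum_divisors_prime_pow hp',
    sum_range_squarefreeProd_prime_pow g hp' hk]

theorem hasProd_one_add_of_summable_squarefreeProd [NormedCommRing R] [CompleteSpace R]
    {g : ℕ → R} (hsum : Summable fun n => ‖squarefreeProd g n‖) :
    HasProd (fun p : Nat.Primes => 1 + g p) (∑' n, squarefreeProd g n) := by
  convert (isMultiplicative_squarefreeProd g).eulerProduct_hasProd hsum using 1
  ext p
  rw [tsum_eq_sum (s := range 2) fun e he =>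
      squarefreeProd_prime_pow g p.prop (by simp at he; omega),
    sum_range_squarefreeProd_prime_pow g p.prop one_ne_zero]

theorem squarefreeProd_nonneg [CommSemiring R] [PartialOrder R] [IsOrderedRing R] {g : ℕ → R}
    (hg : ∀ p, p.Prime → 0 ≤ g p) (d : ℕ) : 0 ≤ squarefreeProd g d := by
  rw [squarefreeProd_apply]
  split_ifs
  · exact prod_nonneg fun p hp => hg p (Nat.prime_of_mem_primeFactors hp)
  · exact le_rfl

theorem squarefreeProd_div_self [Semifield R] (g : ℕ → R) (d : ℕ) :
    squarefreeProd g d / d = squarefreeProd (fun p => g p / p) d := by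
  by_cases hd : Squarefree d
  · simp only [squarefreeProd_apply, if_pos hd, prod_div_distrib]
    rw [← Nat.cast_prod, Nat.prod_primeFactors_of_squarefree hd]
  · simp [squarefreeProd_apply, hd]

theorem tendsto_sum_Ioc_mul_zeta_div (f : ArithmeticFunction ℝ)
    (hf : Summable fun d => ‖f d / d‖) :
    Tendsto (fun N : ℕ => (∑ n ∈ Ioc 0 N, (f * ζ) n) / N) atTop (𝓝 (∑' d, f d / d)) := by
  have hsum (N : ℕ) : (∑ n ∈ Ioc 0 N, (f * ζ) n) / N = ∑' d, f d * (N / d : ℕ) / N := by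
    rw [sum_Ioc_mul_zeta_eq_sum, sum_div, tsum_eq_sum]
    intro d hd
    rcases Nat.eq_zero_or_pos d with rfl | hd0
    · simp
    · rw [Nat.div_eq_of_lt (by simp_all), Nat.cast_zero, mul_zero, zero_div]
  simp_rw [hsum]
  refine tendsto_tsum_of_dominated_convergence hf (fun d => ?_) (Eventually.of_forall fun N d => ?_)
  · rcases Nat.eq_zero_or_pos d with rfl | hd
    · simp
    have hdiv : Tendsto (fun N : ℕ => (N : ℝ) / d) atTop atTop :=
      tendsto_natCast_atTop_atTop.atTop_div_const (by exact_mod_cast hd)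
    have := (tendsto_nat_floor_div_atTop.comp hdiv).mul_const (f d / d)
    rw [one_mul] at this
    refine this.congr' ((eventually_ne_atTop 0).mono fun N hN => ?_)
    simp only [Function.comp_apply, Nat.floor_div_eq_div]
    field_simp
  · have hq : ((N / d : ℕ) : ℝ) / N ≤ 1 / d := by
      grw [Nat.cast_div_le, div_right_comm, div_self_le_one]
    calc ‖f d * (N / d : ℕ) / N‖ = ‖f d‖ * (((N / d : ℕ) : ℝ) / N) := by
          simp only [norm_mul, norm_div, Real.norm_natCast, mul_div_assoc]
      _ ≤ ‖f d‖ * (1 / d) := by gcongr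
      _ = ‖f d / d‖ := by rw [norm_div, Real.norm_natCast, mul_one_div]

end ArithmeticFunction

open ArithmeticFunction

-- At `p = 2` the factor is `(2 - 2)⁻¹ = 0`, so `twinWeight` vanishes on even numbers.
noncomputable def twinWeight : ArithmeticFunction ℝ :=
  squarefreeProd fun p => ((p : ℝ) - 2)⁻¹

theorem HLconst_eq_mul_sum_divisors {r : ℕ} (hr : r ≠ 0) :
    HLconst r = twinPrimeConst * ∑ d ∈ r.divisors, twinWeight d := by
  rw [HLconst, twinWeight, sum_divisors_squarefreeProd _ hr, prod_filter]
  refine congrArg _ (prod_congr rfl fun p hp => ?_)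
  have h2 := (Nat.prime_of_mem_primeFactors hp).two_le
  split_ifs with hp2
  · have : (p : ℝ) - 2 ≠ 0 := by rw [sub_ne_zero]; exact_mod_cast hp2.ne'
    field_simp
    ring
  · simp [show p = 2 by omega]

theorem twinWeight_div_self (d : ℕ) :
    twinWeight d / d = squarefreeProd (fun p => (((p : ℝ) - 2) * p)⁻¹) d := by
  rw [twinWeight, squarefreeProd_div_self]
  simp only [div_eq_mul_inv, mul_inv]

theorem inv_sub_two_mul_self_nonneg {p : ℕ} (hp : p.Prime) : 0 ≤ (((p : ℝ) - 2) * p)⁻¹ := by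
  have : (2 : ℝ) ≤ p := by exact_mod_cast hp.two_le
  have : 0 ≤ (p : ℝ) - 2 := by linarith
  positivity

theorem inv_sub_two_mul_self_le_rpow {x : ℝ} (hx : 4 ≤ x) :
    ((x - 2) * x)⁻¹ ≤ (x ^ (3 / 2 : ℝ))⁻¹ := by
  have hsqrt : √x ≤ x - 2 := Real.sqrt_le_iff.mpr ⟨by linarith, by nlinarith⟩
  rw [show (3 / 2 : ℝ) = 1 + 1 / 2 by norm_num, Real.rpow_add (by linarith), Real.rpow_one,
    ← Real.sqrt_eq_rpow]
  have := Real.sqrt_pos.mpr (by linarith : 0 < x)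
  exact inv_anti₀ (by positivity) (by nlinarith)

-- `3` is the only prime `p` with `p - 2 < √p`.
theorem inv_sub_two_mul_self_le_prime {p : ℕ} (hp : p.Prime) :
    (((p : ℝ) - 2) * p)⁻¹ ≤ (if p = 3 then 2 else 1) * ((p : ℝ) ^ (3 / 2 : ℝ))⁻¹ := by
  have hpow : 0 ≤ ((p : ℝ) ^ (3 / 2 : ℝ))⁻¹ := by positivity
  rcases hp.eq_two_or_odd with rfl | hodd
  · norm_num
    positivity
  obtain rfl | h4 : p = 3 ∨ 4 ≤ p := by
    have := hp.two_le
    omega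
  · have h3 : (3 : ℝ) ^ (3 / 2 : ℝ) ≤ 6 := by
      rw [show (3 / 2 : ℝ) = 1 + 1 / 2 by norm_num, Real.rpow_add (by norm_num), Real.rpow_one,
        ← Real.sqrt_eq_rpow]
      nlinarith [Real.sq_sqrt (by norm_num : (0 : ℝ) ≤ 3), Real.sqrt_nonneg 3]
    rw [if_pos rfl, ← div_eq_mul_inv, le_div_iff₀ (by positivity)]
    norm_num
    linarith
  · rw [if_neg (by omega), one_mul]
    exact inv_sub_two_mul_self_le_rpow (by exact_mod_cast h4)

theorem squarefreeProd_inv_sub_two_mul_self_le (d : ℕ) :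
    squarefreeProd (fun p => (((p : ℝ) - 2) * p)⁻¹) d ≤ 2 * ((d : ℝ) ^ (3 / 2 : ℝ))⁻¹ := by
  rw [squarefreeProd_apply]
  split_ifs with hd
  · calc ∏ p ∈ d.primeFactors, (((p : ℝ) - 2) * p)⁻¹
        ≤ ∏ p ∈ d.primeFactors, ((if p = 3 then 2 else 1) * ((p : ℝ) ^ (3 / 2 : ℝ))⁻¹) :=
          prod_le_prod (fun p hp => inv_sub_two_mul_self_nonneg (Nat.prime_of_mem_primeFactors hp))
            fun p hp => inv_sub_two_mul_self_le_prime (Nat.prime_of_mem_primeFactors hp)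
      _ = (if 3 ∈ d.primeFactors then 2 else 1) * ((d : ℝ) ^ (3 / 2 : ℝ))⁻¹ := by
          rw [prod_mul_distrib, prod_ite_eq', prod_inv_distrib,
            Real.finsetProd_rpow _ _ fun p _ => Nat.cast_nonneg p, ← Nat.cast_prod,
            Nat.prod_primeFactors_of_squarefree hd]
      _ ≤ 2 * ((d : ℝ) ^ (3 / 2 : ℝ))⁻¹ := by
          gcongr
          split_ifs <;> norm_num
  · positivity

theorem summable_squarefreeProd_inv_sub_two_mul_self :
    Summable (squarefreeProd fun p => (((p : ℝ) - 2) * p)⁻¹) :=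
  ((Real.summable_nat_rpow_inv.mpr (by norm_num)).mul_left 2).of_nonneg_of_le
    (squarefreeProd_nonneg fun _ => inv_sub_two_mul_self_nonneg)
    squarefreeProd_inv_sub_two_mul_self_le

theorem inv_one_add_inv_sub_two_mul_self {x : ℝ} (hx : 2 < x) :
    (1 + ((x - 2) * x)⁻¹)⁻¹ = 1 - 1 / (x - 1) ^ 2 := by
  have : x - 2 ≠ 0 := by linarith
  have : x - 1 ≠ 0 := by linarith
  have : x ≠ 0 := by linarith
  refine (eq_inv_of_mul_eq_one_left ?_).symm
  field_simp
  ring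

theorem twinPrimeConst_mul_tsum_squarefreeProd :
    twinPrimeConst * ∑' d, squarefreeProd (fun p => (((p : ℝ) - 2) * p)⁻¹) d = 1 := by
  set G := squarefreeProd fun p => (((p : ℝ) - 2) * p)⁻¹
  have hG : Summable G := summable_squarefreeProd_inv_sub_two_mul_self
  have hpos : 0 < ∑' d, G d := lt_of_lt_of_le (by simp [G, squarefreeProd_apply])
    (hG.le_tsum 1 fun d _ => squarefreeProd_nonneg (fun _ => inv_sub_two_mul_self_nonneg) d)
  -- The Euler factor at `p = 2` is `1`, so the product may be restricted to odd primes.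
  have hEuler : HasProd (fun q : {p : ℕ // p.Prime ∧ 2 < p} => 1 + ((((q : ℕ) : ℝ) - 2) * q)⁻¹)
      (∑' d, G d) := by
    let ι (q : {p : ℕ // p.Prime ∧ 2 < p}) : Nat.Primes := ⟨q, q.2.1⟩
    refine (Function.Injective.hasProd_iff (g := ι)
      (fun a b h => Subtype.ext (congrArg (fun p : Nat.Primes => (p : ℕ)) h)) fun p hp => ?_).mpr
      (hasProd_one_add_of_summable_squarefreeProd hG.norm)
    have : (p : ℕ) = 2 := by
      by_contra h
      exact hp ⟨⟨p, p.2, lt_of_le_of_ne p.2.two_le (Ne.symm h)⟩, rfl⟩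
    simp [this]
  have hTwinConst : HasProd (fun q : {p : ℕ // p.Prime ∧ 2 < p} => 1 - 1 / ((q : ℕ) - 1 : ℝ) ^ 2)
      (∑' d, G d)⁻¹ := by
    refine (hEuler.inv₀ hpos.ne').congr_fun fun q => ?_
    rw [inv_one_add_inv_sub_two_mul_self (by exact_mod_cast q.2.2)]
  rw [twinPrimeConst, hTwinConst.tprod_eq, inv_mul_cancel₀ hpos.ne']

/-- The Hardy–Littlewood prime-pair constants have mean value one:
`(1/m) ∑_{r=1}^m C_{2r} → 1` as `m → ∞`. -/
theorem HLconst_mean_value_one :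
    Tendsto (fun m : ℕ => (∑ r ∈ Finset.Icc 1 m, HLconst r) / (m : ℝ)) atTop (𝓝 1) := by
  have hw : Summable fun d => ‖twinWeight d / d‖ := by
    simpa only [twinWeight_div_self] using summable_squarefreeProd_inv_sub_two_mul_self.norm
  have hmean := (tendsto_sum_Ioc_mul_zeta_div twinWeight hw).const_mul twinPrimeConst
  simp only [twinWeight_div_self, twinPrimeConst_mul_tsum_squarefreeProd] at hmean
  refine hmean.congr fun m => ?_
  rw [← Icc_add_one_left_eq_Ioc, zero_add, mul_div_assoc', mul_sum]
  refine congrArg (· / _) (sum_congr rfl fun r hr => ?_)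
  rw [coe_mul_zeta_apply, HLconst_eq_mul_sum_divisors (by simp at hr; omega)]
end

section
/- For every positive integer h, the subsequence {C_{2hr}} of the Hardy–Littlewood constants has a mean value: (1/m) · ∑_{r=1}^{m} C_{2hr} → ∏_{p ∣ h, p > 2} p/(p−1) as m → ∞, where the product runs over the odd primes dividing h. -/
open Filter Topology

/-!
Write `C_{2n} = C₂ ∑_{d ∣ n} w(d)`, where `w` is the multiplicative function supported on odd
squarefree numbers with `w(p) = 1/(p-2)`. Since `d ∣ h r` iff `d / (d, h) ∣ r`, exchanging the sums
gives `∑_{r ≤ m} ∑_{d ∣ h r} w(d) = ∑_d w(d) ⌊m (d, h) / d⌋`. The bound `w(d) √d ≤ 2` makes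
`∑_d w(d) (d, h) / d` converge, so by dominated convergence the mean value is
`C₂ ∑_d w(d) (d, h) / d`. This series is the Euler product `∏_{p > 2} (1 + (p, h) / (p (p-2)))`,
and multiplying its factor at `p` by the factor `1 - 1/(p-1)²` of `C₂` leaves `p/(p-1)` when
`p ∣ h` and `1` otherwise.
-/

open Finset

theorem Nat.dvd_mul_iff_div_gcd_dvd {d h : ℕ} (hh : h ≠ 0) (r : ℕ) :
    d ∣ h * r ↔ d / d.gcd h ∣ r := by
  have hg : 0 < d.gcd h := Nat.gcd_pos_of_pos_right d (Nat.pos_of_ne_zero hh)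
  calc d ∣ h * r ↔ d.gcd h * (d / d.gcd h) ∣ d.gcd h * (h / d.gcd h * r) := by
        rw [Nat.mul_div_cancel' (Nat.gcd_dvd_left d h), ← mul_assoc,
          Nat.mul_div_cancel' (Nat.gcd_dvd_right d h)]
    _ ↔ d / d.gcd h ∣ r := by
        rw [Nat.mul_dvd_mul_iff_left hg, (Nat.coprime_div_gcd_div_gcd hg).dvd_mul_left]

theorem Nat.div_div_gcd_eq_zero_of_mul_lt {d h m : ℕ} (hh : h ≠ 0) (hd : h * m < d) :
    m / (d / d.gcd h) = 0 := by
  refine Nat.div_eq_of_lt (lt_of_not_ge fun hle => hd.not_ge ?_)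
  calc d = d.gcd h * (d / d.gcd h) := (Nat.mul_div_cancel' (Nat.gcd_dvd_left d h)).symm
    _ ≤ h * m := Nat.mul_le_mul (Nat.gcd_le_right d (Nat.pos_of_ne_zero hh)) hle

theorem Nat.sum_Icc_sum_divisors_mul {M : Type*} [AddCommMonoid M] (f : ℕ → M) {h : ℕ} (hh : h ≠ 0)
    (m : ℕ) :
    ∑ r ∈ Icc 1 m, ∑ d ∈ (h * r).divisors, f d =
      ∑ d ∈ Icc 1 (h * m), (m / (d / d.gcd h)) • f d := by
  have hdiv : ∀ r ∈ Icc 1 m, (h * r).divisors = {d ∈ Icc 1 (h * m) | d ∣ h * r} := by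
    intro r hr
    rw [mem_Icc] at hr
    have hhr : h * r ≠ 0 := mul_ne_zero hh (by omega)
    ext d
    simp only [Nat.mem_divisors, mem_filter, mem_Icc]
    constructor
    · rintro ⟨hd, -⟩
      exact ⟨⟨Nat.pos_of_dvd_of_pos hd (by positivity), (Nat.le_of_dvd (by positivity) hd).trans
        (Nat.mul_le_mul_left h hr.2)⟩, hd⟩
    · exact fun hd => ⟨hd.2, hhr⟩
  rw [sum_congr rfl fun r hr => by rw [hdiv r hr, sum_filter], sum_comm]
  refine sum_congr rfl fun d _ => ?_
  simp_rw [Nat.dvd_mul_iff_div_gcd_dvd hh]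
  rw [← sum_filter, sum_const, ← Nat.Ioc_filter_dvd_card_eq_div m, ← Icc_add_one_left_eq_Ioc,
    zero_add]

theorem tendsto_tsum_natCast_div_mul_div_atTop (k : ℕ → ℕ) {f : ℕ → ℝ}
    (hf : Summable fun d => f d / k d) :
    Tendsto (fun m : ℕ => (∑' d, ((m / k d : ℕ) : ℝ) * f d) / m) atTop
      (𝓝 (∑' d, f d / k d)) := by
  simp_rw [← tsum_div_const]
  refine tendsto_tsum_of_dominated_convergence hf.abs (fun d => ?_) (.of_forall fun m d => ?_)
  · rcases Nat.eq_zero_or_pos (k d) with hk | hk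
    · simp [hk]
    have hx : Tendsto (fun m : ℕ => (m : ℝ) / k d) atTop atTop :=
      tendsto_natCast_atTop_atTop.atTop_div_const (by positivity)
    have hfloor := (tendsto_nat_floor_div_atTop.comp hx).mul_const (f d / k d)
    rw [one_mul] at hfloor
    refine hfloor.congr' ?_
    filter_upwards [eventually_gt_atTop 0] with m hm
    simp only [Function.comp_apply, Nat.floor_div_eq_div]
    field_simp
  · rw [Real.norm_eq_abs, abs_div, abs_mul, abs_div, Nat.abs_cast, Nat.abs_cast, Nat.abs_cast]
    rcases m.eq_zero_or_pos with rfl | hm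
    · simp only [CharP.cast_eq_zero, div_zero]
      positivity
    rw [div_le_iff₀ (by positivity)]
    calc ((m / k d : ℕ) : ℝ) * |f d| ≤ (m / k d) * |f d| := by gcongr; exact Nat.cast_div_le
      _ = |f d| / k d * m := by ring

theorem tendsto_sum_Icc_sum_divisors_mul_div_atTop {f : ℕ → ℝ} {h : ℕ} (hh : h ≠ 0)
    (hf : Summable fun d => f d * d.gcd h / d) :
    Tendsto (fun m : ℕ => (∑ r ∈ Icc 1 m, ∑ d ∈ (h * r).divisors, f d) / m) atTop
      (𝓝 (∑' d, f d * d.gcd h / d)) := by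
  have hcast : ∀ d, f d / ((d / d.gcd h : ℕ) : ℝ) = f d * d.gcd h / d := fun d => by
    have : (d.gcd h : ℝ) ≠ 0 := by exact_mod_cast Nat.gcd_ne_zero_right hh
    rw [Nat.cast_div (Nat.gcd_dvd_left d h) this, div_div_eq_mul_div]
  have hsum : ∀ m, ∑ r ∈ Icc 1 m, ∑ d ∈ (h * r).divisors, f d =
      ∑' d, ((m / (d / d.gcd h) : ℕ) : ℝ) * f d := fun m => by
    rw [Nat.sum_Icc_sum_divisors_mul f hh, tsum_eq_sum (s := Icc 1 (h * m))]
    · simp_rw [nsmul_eq_mul]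
    · intro d hd
      rcases Nat.eq_zero_or_pos d with rfl | hd0
      · simp
      rw [mem_Icc, not_and, not_le] at hd
      rw [Nat.div_div_gcd_eq_zero_of_mul_lt hh (hd hd0), Nat.cast_zero, zero_mul]
  simp_rw [hsum, ← hcast]
  exact tendsto_tsum_natCast_div_mul_div_atTop _ (by simpa only [hcast] using hf)

section SquarefreeMult

variable {R : Type*} [CommMonoidWithZero R] (g : ℕ → R)

def squarefreeMult (d : ℕ) : R :=
  if Squarefree d then ∏ p ∈ d.primeFactors, g p else 0

theorem squarefreeMult_of_not_squarefree {d : ℕ} (hd : ¬ Squarefree d) :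
    squarefreeMult g d = 0 :=
  if_neg hd

@[simp]
theorem squarefreeMult_one : squarefreeMult g 1 = 1 := by
  simp [squarefreeMult]

theorem squarefreeMult_prime {p : ℕ} (hp : p.Prime) : squarefreeMult g p = g p := by
  simp [squarefreeMult, hp.squarefree, hp.primeFactors]

theorem squarefreeMult_mul {a b : ℕ} (hab : a.Coprime b) :
    squarefreeMult g (a * b) = squarefreeMult g a * squarefreeMult g b := by
  by_cases ha : Squarefree a
  · by_cases hb : Squarefree b
    · rw [squarefreeMult, if_pos (Nat.squarefree_mul_iff.mpr ⟨hab, ha, hb⟩), squarefreeMult,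
        squarefreeMult, if_pos ha, if_pos hb, Nat.primeFactors_mul ha.ne_zero hb.ne_zero,
        prod_union hab.disjoint_primeFactors]
    · rw [squarefreeMult_of_not_squarefree g hb, squarefreeMult_of_not_squarefree g
        fun h => hb (Nat.squarefree_mul_iff.mp h).2.2, mul_zero]
  · rw [squarefreeMult_of_not_squarefree g ha, squarefreeMult_of_not_squarefree g
      fun h => ha (Nat.squarefree_mul_iff.mp h).2.1, zero_mul]

theorem squarefreeMult_prod_primes {t : Finset ℕ} (ht : ∀ p ∈ t, p.Prime) :
    squarefreeMult g (∏ p ∈ t, p) = ∏ p ∈ t, g p := by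
  have hsq : Squarefree (∏ p ∈ t, p) :=
    squarefree_prod_of_pairwise_isCoprime (fun p hp q hq hpq => Nat.coprime_iff_isRelPrime.mp
      ((Nat.coprime_primes (ht p hp) (ht q hq)).mpr hpq)) fun p hp => (ht p hp).squarefree
  rw [squarefreeMult, if_pos hsq, Nat.primeFactors_prod ht]

end SquarefreeMult

theorem sum_divisors_squarefreeMult {R : Type*} [CommSemiring R] (g : ℕ → R) {n : ℕ}
    (hn : n ≠ 0) :
    ∑ d ∈ n.divisors, squarefreeMult g d = ∏ p ∈ n.primeFactors, (1 + g p) := by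
  rw [← sum_filter_of_ne (p := Squarefree) fun d _ hd =>
      by_contra fun hsq => hd (squarefreeMult_of_not_squarefree g hsq),
    Nat.sum_divisors_filter_squarefree hn, prod_one_add, Nat.factors_eq]
  simp only [List.toFinset_coe, Nat.toFinset_factors]
  refine sum_congr rfl fun t ht => ?_
  rw [prod_val, ← squarefreeMult_prod_primes g fun p hp =>
    Nat.prime_of_mem_primeFactors (mem_powerset.mp ht hp)]
  rfl

theorem hasProd_one_add_of_squarefree_support {R : Type*} [NormedCommRing R] [CompleteSpace R]
    {f : ℕ → R} (hf₁ : f 1 = 1) (hmul : ∀ {m n : ℕ}, m.Coprime n → f (m * n) = f m * f n)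
    (hsupp : ∀ n, ¬ Squarefree n → f n = 0) (hsum : Summable (‖f ·‖)) :
    HasProd (fun p : Nat.Primes => 1 + f p) (∑' n, f n) := by
  have hpow : ∀ p : Nat.Primes, ∑' e, f ((p : ℕ) ^ e) = 1 + f p := fun p => by
    rw [tsum_eq_sum (s := range 2) fun e he => hsupp _ fun hsq => he (mem_range.mpr ?_)]
    · simp [sum_range_succ, hf₁]
    · have := (Nat.squarefree_pow_iff p.2.ne_one (by rintro rfl; simp at he)).mp hsq
      omega
  simpa only [hpow] using
    EulerProduct.eulerProduct_hasProd hf₁ hmul hsum (hsupp 0 not_squarefree_zero)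

/-- `(2 - 2)⁻¹ = 0` in `ℝ`, so only odd squarefree numbers carry weight. -/
noncomputable def hlWeight : ℕ → ℝ :=
  squarefreeMult fun p => ((p : ℝ) - 2)⁻¹

theorem hlWeight_prime {p : ℕ} (hp : p.Prime) : hlWeight p = ((p : ℝ) - 2)⁻¹ :=
  squarefreeMult_prime _ hp

theorem hlWeight_nonneg (d : ℕ) : 0 ≤ hlWeight d := by
  unfold hlWeight squarefreeMult
  split_ifs
  · exact prod_nonneg fun p hp => inv_nonneg.mpr <| sub_nonneg.mpr <| by
      exact_mod_cast (Nat.prime_of_mem_primeFactors hp).two_le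
  · exact le_rfl

theorem HLconst_eq_mul_sum_divisors_s1 {n : ℕ} (hn : n ≠ 0) :
    HLconst n = twinPrimeConst * ∑ d ∈ n.divisors, hlWeight d := by
  rw [HLconst, hlWeight, sum_divisors_squarefreeMult _ hn, prod_filter]
  congr 1
  refine prod_congr rfl fun p hp => ?_
  have hp2 := (Nat.prime_of_mem_primeFactors hp).two_le
  split_ifs with h2
  · have : (p : ℝ) - 2 ≠ 0 := sub_ne_zero.mpr (by exact_mod_cast h2.ne')
    field_simp
    ring
  · obtain rfl : p = 2 := by omega
    norm_num

theorem inv_sub_two_mul_sqrt_le {p : ℕ} (hp : p.Prime) :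
    ((p : ℝ) - 2)⁻¹ * √p ≤ if p = 3 then 2 else 1 := by
  split_ifs with h3
  · subst h3
    norm_num
    nlinarith [Real.sq_sqrt (show (0 : ℝ) ≤ 3 by norm_num), Real.sqrt_nonneg 3]
  rcases hp.eq_two_or_odd' with rfl | hodd
  · norm_num
  have h5 : (5 : ℝ) ≤ p := by
    have := hp.two_le
    obtain ⟨k, rfl⟩ := hodd
    exact_mod_cast (show 5 ≤ 2 * k + 1 by omega)
  rw [inv_mul_le_iff₀ (by linarith), mul_one]
  nlinarith [Real.sq_sqrt (show (0 : ℝ) ≤ p by positivity), Real.sqrt_nonneg p]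

theorem hlWeight_mul_sqrt_le (d : ℕ) : hlWeight d * √d ≤ 2 := by
  by_cases hd : Squarefree d
  · have hprimes : ∀ p ∈ d.primeFactors, p.Prime := fun p hp => Nat.prime_of_mem_primeFactors hp
    have hsqrt : √(d : ℝ) = ∏ p ∈ d.primeFactors, √(p : ℝ) := by
      conv_lhs => rw [← Nat.prod_primeFactors_of_squarefree hd, Nat.cast_prod]
      exact Real.sqrt_prod _ fun p _ => Nat.cast_nonneg p
    rw [hlWeight, squarefreeMult, if_pos hd, hsqrt, ← prod_mul_distrib]
    calc ∏ p ∈ d.primeFactors, (((p : ℝ) - 2)⁻¹ * √p)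
        ≤ ∏ p ∈ d.primeFactors, (if p = 3 then (2 : ℝ) else 1) :=
          prod_le_prod (fun p hp => mul_nonneg (inv_nonneg.mpr (sub_nonneg.mpr (by
            exact_mod_cast (hprimes p hp).two_le))) (Real.sqrt_nonneg _))
            fun p hp => inv_sub_two_mul_sqrt_le (hprimes p hp)
      _ ≤ 2 := by
          rw [prod_ite_eq']
          split_ifs <;> norm_num
  · rw [hlWeight, squarefreeMult_of_not_squarefree _ hd, zero_mul]
    norm_num

theorem hlWeight_mul_gcd_div_le {h : ℕ} (hh : h ≠ 0) (d : ℕ) :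
    hlWeight d * d.gcd h / d ≤ 2 * h * (1 / (d : ℝ) ^ (3 / 2 : ℝ)) := by
  rcases Nat.eq_zero_or_pos d with rfl | hd
  · simp
  have hd' : (0 : ℝ) < d := by exact_mod_cast hd
  have hsqrt : 0 < √(d : ℝ) := Real.sqrt_pos.mpr hd'
  have hgcd : ((d.gcd h : ℕ) : ℝ) ≤ h := by
    exact_mod_cast Nat.gcd_le_right d (Nat.pos_of_ne_zero hh)
  calc hlWeight d * d.gcd h / d ≤ hlWeight d * h / d := by gcongr; exact hlWeight_nonneg d
    _ = hlWeight d * √d * h / (d * √d) := by field_simp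
    _ ≤ 2 * h / (d * √d) := by gcongr; exact hlWeight_mul_sqrt_le d
    _ = 2 * h * (1 / (d : ℝ) ^ (3 / 2 : ℝ)) := by
      rw [show (3 / 2 : ℝ) = 1 / 2 + 1 by norm_num, Real.rpow_add_one hd'.ne',
        ← Real.sqrt_eq_rpow]
      ring

theorem summable_hlWeight_mul_gcd_div {h : ℕ} (hh : h ≠ 0) :
    Summable fun d => hlWeight d * d.gcd h / d :=
  .of_nonneg_of_le (fun d => by have := hlWeight_nonneg d; positivity)
    (hlWeight_mul_gcd_div_le hh) ((Real.summable_one_div_nat_rpow.mpr (by norm_num)).mul_left _)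

theorem hasProd_oddPrimes_one_add_hlWeight_mul_gcd_div {h : ℕ} (hh : h ≠ 0) :
    HasProd (fun p : {p : ℕ // p.Prime ∧ 2 < p} => 1 + hlWeight p * (p : ℕ).gcd h / p)
      (∑' d, hlWeight d * d.gcd h / d) := by
  have hmul : ∀ {m n : ℕ}, m.Coprime n →
      hlWeight (m * n) * (m * n).gcd h / (m * n : ℕ) =
        hlWeight m * m.gcd h / m * (hlWeight n * n.gcd h / n) := fun {m n} hmn => by
    rw [hlWeight, squarefreeMult_mul _ hmn, Nat.gcd_comm, Nat.Coprime.gcd_mul h hmn,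
      Nat.gcd_comm h, Nat.gcd_comm h]
    push_cast
    ring
  have hprimes := hasProd_one_add_of_squarefree_support
    (f := fun d => hlWeight d * d.gcd h / d) (by simp [hlWeight]) hmul
    (fun n hn => by simp [hlWeight, squarefreeMult_of_not_squarefree _ hn])
    ((summable_hlWeight_mul_gcd_div hh).norm)
  let toPrimes (p : {p : ℕ // p.Prime ∧ 2 < p}) : Nat.Primes := ⟨p, p.2.1⟩
  refine (Function.Injective.hasProd_iff (g := toPrimes)
    (fun p q hpq => Subtype.ext (congrArg Subtype.val hpq :)) fun q hq => ?_).mpr hprimes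
  obtain h2 : (q : ℕ) = 2 := by
    by_contra hne
    exact hq ⟨⟨q, q.2, lt_of_le_of_ne q.2.two_le (Ne.symm hne)⟩, rfl⟩
  simp [h2, hlWeight_prime Nat.prime_two]

theorem multipliable_one_sub_one_div_sub_one_sq :
    Multipliable fun p : {p : ℕ // p.Prime ∧ 2 < p} => 1 - 1 / ((p : ℕ) - 1 : ℝ) ^ 2 := by
  simp_rw [sub_eq_add_neg]
  refine multipliable_one_add_of_summable <|
    (((Real.summable_one_div_nat_pow.mpr one_lt_two).mul_left 4).subtype _).of_nonneg_of_le
      (fun _ => norm_nonneg _) fun p => ?_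
  have hp : (3 : ℝ) ≤ (p : ℕ) := by exact_mod_cast p.2.2
  rw [norm_neg, Real.norm_of_nonneg (by positivity), Function.comp_apply,
    div_le_iff₀ (by nlinarith)]
  field_simp
  nlinarith

theorem one_sub_one_div_sub_one_sq_mul {p : ℕ} (hp : p.Prime) (hp2 : 2 < p) (h : ℕ) :
    (1 - 1 / ((p : ℝ) - 1) ^ 2) * (1 + hlWeight p * p.gcd h / p) =
      if p ∣ h then (p : ℝ) / (p - 1) else 1 := by
  have h2 : (2 : ℝ) < p := by exact_mod_cast hp2
  have : (p : ℝ) - 1 ≠ 0 := by linarith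
  have : (p : ℝ) - 2 ≠ 0 := by linarith
  rw [hlWeight_prime hp]
  split_ifs with hdvd
  · rw [Nat.gcd_eq_left hdvd]
    field_simp
    ring
  · rw [show p.gcd h = 1 from hp.coprime_iff_not_dvd.mpr hdvd]
    field_simp
    ring

theorem tprod_oddPrimes_ite_dvd {M : Type*} [CommMonoid M] [TopologicalSpace M] (φ : ℕ → M)
    {h : ℕ} (hh : h ≠ 0) :
    ∏' p : {p : ℕ // p.Prime ∧ 2 < p}, (if (p : ℕ) ∣ h then φ p else 1) =
      ∏ p ∈ h.primeFactors.filter (2 < ·), φ p := by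
  refine (tprod_subtype {p : ℕ | p.Prime ∧ 2 < p} fun p => if p ∣ h then φ p else 1).trans ?_
  rw [tprod_eq_prod (s := h.primeFactors.filter (2 < ·))]
  · refine prod_congr rfl fun p hp => ?_
    simp only [mem_filter, Nat.mem_primeFactors] at hp
    simp [Set.mulIndicator, hp]
  · intro p hp
    grind [Set.mulIndicator]

theorem twinPrimeConst_mul_tsum_hlWeight_mul_gcd_div {h : ℕ} (hh : h ≠ 0) :
    twinPrimeConst * ∑' d, hlWeight d * d.gcd h / d =
      ∏ p ∈ h.primeFactors.filter (2 < ·), (p : ℝ) / (p - 1) := by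
  have hprod := hasProd_oddPrimes_one_add_hlWeight_mul_gcd_div hh
  rw [twinPrimeConst, ← hprod.tprod_eq,
    ← multipliable_one_sub_one_div_sub_one_sq.tprod_mul hprod.multipliable,
    ← tprod_oddPrimes_ite_dvd _ hh]
  exact tprod_congr fun p => one_sub_one_div_sub_one_sq_mul p.2.1 p.2.2 h

/-- For every positive integer `h`, the subsequence `{C_{2hr}}` has mean value
`∏_{p ∣ h, p > 2} p/(p-1)`: `(1/m) ∑_{r=1}^m C_{2hr} → ∏_{p ∣ h, p > 2} p/(p-1)`. -/
theorem HLconst_subsequence_mean_value (h : ℕ) (hh : 0 < h) :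
    Tendsto (fun m : ℕ => (∑ r ∈ Finset.Icc 1 m, HLconst (h * r)) / (m : ℝ)) atTop
      (𝓝 (∏ p ∈ h.primeFactors.filter (fun p => 2 < p), ((p : ℝ) / ((p : ℝ) - 1)))) := by
  have hmean := (tendsto_sum_Icc_sum_divisors_mul_div_atTop hh.ne'
    (summable_hlWeight_mul_gcd_div hh.ne')).const_mul twinPrimeConst
  rw [twinPrimeConst_mul_tsum_hlWeight_mul_gcd_div hh.ne'] at hmean
  refine hmean.congr fun m => ?_
  rw [mul_div_assoc', mul_sum]
  congr 1
  refine sum_congr rfl fun r hr => ?_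
  rw [HLconst_eq_mul_sum_divisors_s1 (mul_ne_zero hh.ne' (by simp at hr; omega))]
end

section
/- For real constants a, b, c, the function φ(y, v) = (|y|+1)^{−a} · (|v|+1)^{−b} · (|y+v|+1)^{−c} is Lebesgue integrable over ℝ² if and only if a + b > 1, a + c > 1, b + c > 1 and a + b + c > 2. -/
/-!
Write `⟨x⟩ = |x| + 1` and `x₁ = y`, `x₂ = v`, `x₃ = y + v`, so that
`φ = ⟨x₁⟩^{-a} ⟨x₂⟩^{-b} ⟨x₃⟩^{-c}`. By the triangle inequality the two largest of
`|x₁|, |x₂|, |x₃|` are comparable. Where `x₁` is the smallest, `φ ≲ ⟨x₁⟩^{-a} ⟨x₂⟩^{-(b+c)}`, and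
since `⟨x₁⟩ ≤ ⟨x₂⟩` part of the exponent `b + c` may be moved onto `x₁`: when `b + c > 1` and
`a + b + c > 2` this gives a product `⟨x₁⟩^{-p} ⟨x₂⟩^{-q}` with `p, q > 1`, integrable by Fubini.
The regions where `x₂` or `x₃` is smallest are alike, the last one after the shear
`(y, v) ↦ (y, y + v)`.

Conversely, for `y > 0` we have `φ ≳ ⟨y⟩^{-(a+c)}` on the strip `0 ≤ v ≤ 1` and
`φ ≳ ⟨y⟩^{-(a+b)}` on the strip `-y-1 ≤ v ≤ -y`; on the cone `y ≤ v ≤ 2y + 1`, of width `⟨y⟩`, all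
three brackets are comparable to `⟨y⟩`, so the `v`-integral is `≳ ⟨y⟩^{1-(a+b+c)}`. These are not
integrable in `y` when `a + c ≤ 1`, `a + b ≤ 1`, resp. `a + b + c ≤ 2`; the case `b + c ≤ 1` follows
by swapping `y` and `v`.
-/

open MeasureTheory Set Real
open scoped ENNReal

lemma rpow_neg_le_rpow_abs_mul_rpow_neg {x y l c : ℝ} (hx : 0 < x) (hy : 0 < y)
    (hxy : x ≤ l * y) (hyx : y ≤ l * x) : x ^ (-c) ≤ l ^ |c| * y ^ (-c) := by
  have hl : 0 < l := pos_of_mul_pos_left (hy.trans_le hyx) hx.le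
  rcases le_total 0 c with hc | hc
  · rw [abs_of_nonneg hc]
    calc x ^ (-c) ≤ (y / l) ^ (-c) :=
          rpow_le_rpow_of_nonpos (div_pos hy hl) (by rwa [div_le_iff₀' hl]) (neg_nonpos.2 hc)
      _ = l ^ c * y ^ (-c) := by rw [div_rpow hy.le hl.le, rpow_neg hl.le, div_inv_eq_mul, mul_comm]
  · rw [abs_of_nonpos hc]
    calc x ^ (-c) ≤ (l * y) ^ (-c) := rpow_le_rpow hx.le hxy (neg_nonneg.2 hc)
      _ = l ^ (-c) * y ^ (-c) := mul_rpow hl.le hy.le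

lemma continuous_abs_add_one_rpow (p : ℝ) : Continuous fun t : ℝ => (|t| + 1) ^ p :=
  (continuous_abs.add continuous_const).rpow_const fun t => Or.inl (by positivity : |t| + 1 ≠ 0)

lemma integrable_abs_add_one_rpow_neg {p : ℝ} (hp : 1 < p) :
    Integrable fun x : ℝ => (|x| + 1) ^ (-p) := by
  simpa [add_comm] using integrable_one_add_norm (E := ℝ) (μ := volume) (by simpa using hp)

lemma not_integrableOn_Ioi_abs_add_one_rpow_neg {p : ℝ} (hp : p ≤ 1) :
    ¬ IntegrableOn (fun x : ℝ => (|x| + 1) ^ (-p)) (Ioi 0) := by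
  intro h
  refine not_integrableOn_Ioi_inv (a := 1) <|
    ((h.mono_set (Ioi_subset_Ioi zero_le_one)).const_mul 2).mono'
      measurable_inv.aestronglyMeasurable ?_
  filter_upwards [ae_restrict_mem measurableSet_Ioi] with x (hx : 1 < x)
  rw [norm_inv, norm_of_nonneg (by linarith), abs_of_pos (by linarith)]
  calc x⁻¹ ≤ 2 * (x + 1)⁻¹ := by
        rw [← div_eq_mul_inv, le_div_iff₀ (by linarith)]; field_simp; linarith
    _ = 2 * (x + 1) ^ (-1 : ℝ) := by rw [rpow_neg_one]
    _ ≤ 2 * (x + 1) ^ (-p) := by gcongr; linarith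

lemma integrable_abs_add_one_rpow_neg_mul {p q : ℝ} (hp : 1 < p) (hq : 1 < q) :
    Integrable fun x : ℝ × ℝ => (|x.1| + 1) ^ (-p) * (|x.2| + 1) ^ (-q) := by
  rw [Measure.volume_eq_prod]
  exact (integrable_abs_add_one_rpow_neg hp).mul_prod (integrable_abs_add_one_rpow_neg hq)

lemma integrable_abs_add_one_rpow_neg_mul_abs_add {p q : ℝ} (hp : 1 < p) (hq : 1 < q) :
    Integrable fun x : ℝ × ℝ => (|x.1| + 1) ^ (-p) * (|x.1 + x.2| + 1) ^ (-q) := by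
  have := integrable_abs_add_one_rpow_neg_mul hp hq
  rw [Measure.volume_eq_prod] at this ⊢
  exact (measurePreserving_prod_add volume volume).integrable_comp this.1 |>.mpr this

lemma abs_add_one_rpow_neg_mul_le {s t u a b c p q : ℝ} (hst : |s| ≤ |t|) (hsu : |s| ≤ |u|)
    (ht : |t| ≤ |s| + |u|) (hu : |u| ≤ |s| + |t|) (hpq : a + b + c = p + q) (hq : q ≤ b + c) :
    (|s| + 1) ^ (-a) * (|t| + 1) ^ (-b) * (|u| + 1) ^ (-c) ≤
      2 ^ |c| * ((|s| + 1) ^ (-p) * (|t| + 1) ^ (-q)) := by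
  have hs : 0 < |s| + 1 := by positivity
  have ht₀ : 0 < |t| + 1 := by positivity
  have hu_le : (|u| + 1) ^ (-c) ≤ 2 ^ |c| * (|t| + 1) ^ (-c) :=
    rpow_neg_le_rpow_abs_mul_rpow_neg (by positivity) ht₀ (by linarith) (by linarith)
  have hsplit : (|t| + 1) ^ (-b) * (|t| + 1) ^ (-c) =
      (|t| + 1) ^ (-(b + c - q)) * (|t| + 1) ^ (-q) := by
    rw [← rpow_add ht₀, ← rpow_add ht₀]; ring_nf
  have hshift : (|t| + 1) ^ (-(b + c - q)) ≤ (|s| + 1) ^ (-(b + c - q)) :=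
    rpow_le_rpow_of_nonpos hs (by linarith) (by linarith)
  calc (|s| + 1) ^ (-a) * (|t| + 1) ^ (-b) * (|u| + 1) ^ (-c)
      ≤ (|s| + 1) ^ (-a) * (|t| + 1) ^ (-b) * (2 ^ |c| * (|t| + 1) ^ (-c)) := by gcongr
    _ = 2 ^ |c| * ((|s| + 1) ^ (-a) * (|t| + 1) ^ (-(b + c - q)) * (|t| + 1) ^ (-q)) := by
      linear_combination (2 ^ |c| * (|s| + 1) ^ (-a)) * hsplit
    _ ≤ 2 ^ |c| * ((|s| + 1) ^ (-a) * (|s| + 1) ^ (-(b + c - q)) * (|t| + 1) ^ (-q)) := by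
      gcongr
    _ = 2 ^ |c| * ((|s| + 1) ^ (-p) * (|t| + 1) ^ (-q)) := by
      rw [← rpow_add hs, show -a + -(b + c - q) = -p by linarith]

theorem MeasureTheory.Integrable.integrableOn_of_enorm_le_lintegral_enorm_prod {α β E F : Type*}
    [MeasurableSpace α] [MeasurableSpace β] {μ : Measure α} {ν : Measure β} [SFinite ν]
    [NormedAddCommGroup E] [NormedAddCommGroup F] {f : α × β → E} (hf : Integrable f (μ.prod ν))
    {g : α → F} {s : Set α} (hs : MeasurableSet s) (hg : AEStronglyMeasurable g (μ.restrict s))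
    (h : ∀ x ∈ s, ‖g x‖ₑ ≤ ∫⁻ y, ‖f (x, y)‖ₑ ∂ν) : IntegrableOn g s μ := by
  refine ⟨hg, ?_⟩
  calc ∫⁻ x in s, ‖g x‖ₑ ∂μ ≤ ∫⁻ x in s, ∫⁻ y, ‖f (x, y)‖ₑ ∂ν ∂μ := setLIntegral_mono' hs h
    _ ≤ ∫⁻ x, ∫⁻ y, ‖f (x, y)‖ₑ ∂ν ∂μ := setLIntegral_le_lintegral _ _
    _ = ∫⁻ z, ‖f z‖ₑ ∂μ.prod ν := (lintegral_prod _ hf.1.enorm).symm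
    _ < ⊤ := hf.2

lemma not_integrable_of_rpow_neg_le_on_Icc {F : ℝ × ℝ → ℝ} {p k C : ℝ} (hpk : p - k ≤ 1)
    (l : ℝ → ℝ) (h : ∀ y > 0, ∀ v ∈ Icc (l y) (l y + (y + 1) ^ k), (y + 1) ^ (-p) ≤ C * F (y, v)) :
    ¬ Integrable F := by
  intro hF
  rw [Measure.volume_eq_prod] at hF
  refine not_integrableOn_Ioi_abs_add_one_rpow_neg hpk <|
    (hF.const_mul C).integrableOn_of_enorm_le_lintegral_enorm_prod measurableSet_Ioi
      (continuous_abs_add_one_rpow _).aestronglyMeasurable fun y (hy : 0 < y) => ?_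
  have hm : 0 ≤ (y + 1) ^ (-p) := by positivity
  calc ‖(|y| + 1) ^ (-(p - k))‖ₑ
        = ENNReal.ofReal ((y + 1) ^ (-p)) * volume (Icc (l y) (l y + (y + 1) ^ k)) := by
        rw [Real.volume_Icc, ← ENNReal.ofReal_mul hm, add_sub_cancel_left,
          ← rpow_add (by linarith), abs_of_pos hy, Real.enorm_eq_ofReal (by positivity)]
        ring_nf
    _ = ∫⁻ v in Icc (l y) (l y + (y + 1) ^ k), ENNReal.ofReal ((y + 1) ^ (-p)) :=
        (setLIntegral_const _ _).symm
    _ ≤ ∫⁻ v in Icc (l y) (l y + (y + 1) ^ k), ‖C * F (y, v)‖ₑ :=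
        setLIntegral_mono' measurableSet_Icc fun v hv => by
          rw [Real.enorm_eq_ofReal (hm.trans (h y hy v hv))]
          exact ENNReal.ofReal_le_ofReal (h y hy v hv)
    _ ≤ ∫⁻ v, ‖C * F (y, v)‖ₑ := setLIntegral_le_lintegral _ _

noncomputable def tripleWeight (a b c : ℝ) (x : ℝ × ℝ) : ℝ :=
  (|x.1| + 1) ^ (-a) * (|x.2| + 1) ^ (-b) * (|x.1 + x.2| + 1) ^ (-c)

lemma continuous_tripleWeight (a b c : ℝ) : Continuous (tripleWeight a b c) :=
  ((continuous_abs_add_one_rpow _).comp continuous_fst).mul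
    ((continuous_abs_add_one_rpow _).comp continuous_snd) |>.mul
    ((continuous_abs_add_one_rpow _).comp (continuous_fst.add continuous_snd))

lemma tripleWeight_nonneg (a b c : ℝ) (x : ℝ × ℝ) : 0 ≤ tripleWeight a b c x := by
  unfold tripleWeight; positivity

lemma tripleWeight_le {a b c q₁ q₂ q₃ : ℝ} (h₁ : q₁ ≤ b + c) (h₂ : q₂ ≤ a + c)
    (h₃ : q₃ ≤ a + b) (y v : ℝ) :
    tripleWeight a b c (y, v) ≤
      2 ^ |c| * ((|y| + 1) ^ (-(a + b + c - q₁)) * (|v| + 1) ^ (-q₁)) +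
      2 ^ |c| * ((|v| + 1) ^ (-(a + b + c - q₂)) * (|y| + 1) ^ (-q₂)) +
      2 ^ |b| * ((|y + v| + 1) ^ (-(a + b + c - q₃)) * (|y| + 1) ^ (-q₃)) := by
  have hy : |y| ≤ |v| + |y + v| := by
    have := abs_sub (y + v) v; rw [add_sub_cancel_right] at this; linarith
  have hv : |v| ≤ |y| + |y + v| := by
    have := abs_sub (y + v) y; rw [add_sub_cancel_left] at this; linarith
  have hyv : |y + v| ≤ |y| + |v| := abs_add_le y v
  have t₁ : 0 ≤ 2 ^ |c| * ((|y| + 1) ^ (-(a + b + c - q₁)) * (|v| + 1) ^ (-q₁)) := by positivity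
  have t₂ : 0 ≤ 2 ^ |c| * ((|v| + 1) ^ (-(a + b + c - q₂)) * (|y| + 1) ^ (-q₂)) := by positivity
  have t₃ : 0 ≤ 2 ^ |b| * ((|y + v| + 1) ^ (-(a + b + c - q₃)) * (|y| + 1) ^ (-q₃)) := by
    positivity
  obtain ⟨h, h'⟩ | ⟨h, h'⟩ | ⟨h, h'⟩ : (|y| ≤ |v| ∧ |y| ≤ |y + v|) ∨ (|v| ≤ |y| ∧ |v| ≤ |y + v|) ∨
      (|y + v| ≤ |y| ∧ |y + v| ≤ |v|) := by
    rcases le_total |y| |v| with h | h <;> rcases le_total |y| |y + v| with h' | h' <;>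
      rcases le_total |v| |y + v| with h'' | h'' <;>
      first
      | exact Or.inl ⟨by linarith, by linarith⟩
      | exact Or.inr (Or.inl ⟨by linarith, by linarith⟩)
      | exact Or.inr (Or.inr ⟨by linarith, by linarith⟩)
  · have := abs_add_one_rpow_neg_mul_le h h' hv hyv
      (show a + b + c = a + b + c - q₁ + q₁ by ring) h₁
    exact this.trans (by linarith)
  · have := abs_add_one_rpow_neg_mul_le (a := b) (b := a) h h' hy (by linarith)
      (show b + a + c = a + b + c - q₂ + q₂ by ring) h₂
    calc tripleWeight a b c (y, v) = _ := by unfold tripleWeight; ring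
      _ ≤ _ := this
      _ ≤ _ := by linarith
  · have := abs_add_one_rpow_neg_mul_le (a := c) (b := a) (c := b) h h' (by linarith)
      (by linarith) (show c + a + b = a + b + c - q₃ + q₃ by ring) h₃
    calc tripleWeight a b c (y, v) = _ := by unfold tripleWeight; ring
      _ ≤ _ := this
      _ ≤ _ := by linarith

lemma integrable_tripleWeight {a b c : ℝ} (hab : 1 < a + b) (hac : 1 < a + c) (hbc : 1 < b + c)
    (habc : 2 < a + b + c) : Integrable (tripleWeight a b c) := by
  set S := a + b + c
  -- the split `S = (S - q) + q` with `q = min r (S / 2)` keeps both parts above `1`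
  have hmin : ∀ {r}, 1 < r → 1 < min r (S / 2) ∧ 1 < S - min r (S / 2) := fun {r} hr =>
    ⟨lt_min hr (by linarith), by linarith [min_le_right r (S / 2)]⟩
  obtain ⟨h₁, h₁'⟩ := hmin hbc
  obtain ⟨h₂, h₂'⟩ := hmin hac
  obtain ⟨h₃, h₃'⟩ := hmin hab
  have i₂ : Integrable fun x : ℝ × ℝ =>
      (|x.2| + 1) ^ (-(S - min (a + c) (S / 2))) * (|x.1| + 1) ^ (-min (a + c) (S / 2)) := by
    simpa only [mul_comm] using integrable_abs_add_one_rpow_neg_mul h₂ h₂'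
  have i₃ : Integrable fun x : ℝ × ℝ =>
      (|x.1 + x.2| + 1) ^ (-(S - min (a + b) (S / 2))) * (|x.1| + 1) ^ (-min (a + b) (S / 2)) := by
    simpa only [mul_comm] using integrable_abs_add_one_rpow_neg_mul_abs_add h₃ h₃'
  refine (((integrable_abs_add_one_rpow_neg_mul h₁' h₁).const_mul (2 ^ |c|)).add
    (i₂.const_mul (2 ^ |c|))).add (i₃.const_mul (2 ^ |b|)) |>.mono'
    (continuous_tripleWeight a b c).aestronglyMeasurable (ae_of_all _ fun ⟨y, v⟩ => ?_)
  rw [norm_of_nonneg (tripleWeight_nonneg a b c _)]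
  exact tripleWeight_le (min_le_left _ _) (min_le_left _ _) (min_le_left _ _) y v

lemma rpow_neg_mul_le_tripleWeight {a b c y v X Z : ℝ} (hX : 0 < X) (hZ : 0 < Z)
    (hXv : X ≤ 3 * (|v| + 1)) (hvX : |v| + 1 ≤ 3 * X)
    (hZyv : Z ≤ 3 * (|y + v| + 1)) (hyvZ : |y + v| + 1 ≤ 3 * Z) :
    (|y| + 1) ^ (-a) * X ^ (-b) * Z ^ (-c) ≤ 3 ^ |b| * 3 ^ |c| * tripleWeight a b c (y, v) := by
  have hb := rpow_neg_le_rpow_abs_mul_rpow_neg (c := b) hX (by positivity) hXv hvX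
  have hc := rpow_neg_le_rpow_abs_mul_rpow_neg (c := c) hZ (by positivity) hZyv hyvZ
  calc (|y| + 1) ^ (-a) * X ^ (-b) * Z ^ (-c)
      ≤ (|y| + 1) ^ (-a) * (3 ^ |b| * (|v| + 1) ^ (-b)) * (3 ^ |c| * (|y + v| + 1) ^ (-c)) := by
        gcongr
    _ = 3 ^ |b| * 3 ^ |c| * tripleWeight a b c (y, v) := by unfold tripleWeight; ring

lemma not_integrable_tripleWeight_of_a_add_c_le_one {a b c : ℝ} (hac : a + c ≤ 1) :
    ¬ Integrable (tripleWeight a b c) := by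
  refine not_integrable_of_rpow_neg_le_on_Icc (p := a + c) (k := 0) (C := 3 ^ |b| * 3 ^ |c|)
    (by linarith) (fun _ => 0) fun y hy v hv => ?_
  rw [rpow_zero, zero_add] at hv
  obtain ⟨hv₁, hv₂⟩ := hv
  have hv' : |v| = v := abs_of_nonneg hv₁
  have hyv : |y + v| = y + v := abs_of_nonneg (by linarith)
  calc (y + 1) ^ (-(a + c)) = (|y| + 1) ^ (-a) * 1 ^ (-b) * (y + 1) ^ (-c) := by
        rw [abs_of_pos hy, one_rpow, neg_add, rpow_add (by linarith)]; ring
    _ ≤ _ := rpow_neg_mul_le_tripleWeight one_pos (by linarith) (by linarith)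
        (by linarith) (by linarith) (by linarith)

lemma not_integrable_tripleWeight_of_a_add_b_le_one {a b c : ℝ} (hab : a + b ≤ 1) :
    ¬ Integrable (tripleWeight a b c) := by
  refine not_integrable_of_rpow_neg_le_on_Icc (p := a + b) (k := 0) (C := 3 ^ |b| * 3 ^ |c|)
    (by linarith) (fun y => -y - 1) fun y hy v hv => ?_
  rw [rpow_zero, sub_add_cancel] at hv
  obtain ⟨hv₁, hv₂⟩ := hv
  have hv' : |v| = -v := abs_of_neg (by linarith)
  have hyv : |y + v| = -(y + v) := abs_of_nonpos (by linarith)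
  calc (y + 1) ^ (-(a + b)) = (|y| + 1) ^ (-a) * (y + 1) ^ (-b) * 1 ^ (-c) := by
        rw [abs_of_pos hy, one_rpow, neg_add, rpow_add (by linarith)]; ring
    _ ≤ _ := rpow_neg_mul_le_tripleWeight (by linarith) one_pos (by linarith)
        (by linarith) (by linarith) (by linarith)

lemma not_integrable_tripleWeight_of_add_add_le_two {a b c : ℝ} (habc : a + b + c ≤ 2) :
    ¬ Integrable (tripleWeight a b c) := by
  refine not_integrable_of_rpow_neg_le_on_Icc (p := a + b + c) (k := 1) (C := 3 ^ |b| * 3 ^ |c|)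
    (by linarith) id fun y hy v hv => ?_
  rw [rpow_one, id] at hv
  obtain ⟨hv₁, hv₂⟩ := hv
  have hv' : |v| = v := abs_of_nonneg (by linarith)
  have hyv : |y + v| = y + v := abs_of_nonneg (by linarith)
  calc (y + 1) ^ (-(a + b + c)) = (|y| + 1) ^ (-a) * (y + 1) ^ (-b) * (y + 1) ^ (-c) := by
        rw [abs_of_pos hy, neg_add, neg_add, rpow_add (by linarith), rpow_add (by linarith)]
    _ ≤ _ := rpow_neg_mul_le_tripleWeight (by linarith) (by linarith) (by linarith)
        (by linarith) (by linarith) (by linarith)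

lemma tripleWeight_comp_swap (a b c : ℝ) :
    tripleWeight a b c ∘ Prod.swap = tripleWeight b a c := by
  ext x
  simp only [Function.comp_apply, tripleWeight, Prod.fst_swap, Prod.snd_swap, add_comm x.2]
  ring

lemma integrable_tripleWeight_swap_iff {a b c : ℝ} :
    Integrable (tripleWeight b a c) ↔ Integrable (tripleWeight a b c) := by
  rw [← tripleWeight_comp_swap, Measure.volume_eq_prod, integrable_swap_iff]

lemma not_integrable_tripleWeight_of_b_add_c_le_one {a b c : ℝ} (hbc : b + c ≤ 1) :
    ¬ Integrable (tripleWeight a b c) := by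
  rw [← integrable_tripleWeight_swap_iff]
  exact not_integrable_tripleWeight_of_a_add_c_le_one hbc

/-- For real constants `a, b, c`, the function
`φ(y,v) = (|y|+1)^{-a} (|v|+1)^{-b} (|y+v|+1)^{-c}` is Lebesgue integrable over `ℝ²`
if and only if `a+b > 1`, `a+c > 1`, `b+c > 1` and `a+b+c > 2`. -/
theorem integrable_prod_abs_rpow_iff (a b c : ℝ) :
    Integrable (fun x : ℝ × ℝ =>
        (|x.1| + 1) ^ (-a) * (|x.2| + 1) ^ (-b) * (|x.1 + x.2| + 1) ^ (-c)) ↔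
      (1 < a + b ∧ 1 < a + c ∧ 1 < b + c ∧ 2 < a + b + c) := by
  change Integrable (tripleWeight a b c) ↔ _
  refine ⟨fun h => ⟨?_, ?_, ?_, ?_⟩, fun ⟨hab, hac, hbc, habc⟩ =>
    integrable_tripleWeight hab hac hbc habc⟩
  · by_contra! hab
    exact not_integrable_tripleWeight_of_a_add_b_le_one hab h
  · by_contra! hac
    exact not_integrable_tripleWeight_of_a_add_c_le_one hac h
  · by_contra! hbc
    exact not_integrable_tripleWeight_of_b_add_c_le_one hbc h
  · by_contra! habc
    exact not_integrable_tripleWeight_of_add_add_le_two habc h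
end
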